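/- Let P = ⟨V, {φ}, I, G⟩ be a single-agent SAS+ planning problem and let a₀ ∈ A(φ) be an action applicable in the initial state I. Construct a two-agent MAP problem P' from P as follows: add a fresh Boolean variable p with initial value false; modify a₀ so that its postcondition additionally sets p to true; and add a second agent φ' whose only action a* has precondition p = true and postcondition equal to the goal G. Then: (i) P' is solvable; and (ii) P' satisfies required cooperation (i.e., P' is solvable but not 1-agent solvable) if and only if the original problem P is unsolvable. (The reduction establishing PSPACE-hardness in the proof of Lemma 1.) -/

import Mathlib

/-! ## SAS+ states, actions and plan execution -/

/-- A (partial) SAS+ state: each variable maps to a value or `none` (the undefined value `u`). -/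
abbrev PState (V Val : Type) := V → Option Val

/-- `SubState s₁ s₂` is `s₁ ⊑ s₂`: for every variable, `s₁` is undefined or agrees with `s₂`. -/
def SubState {V Val : Type} (s₁ s₂ : PState V Val) : Prop :=
  ∀ v, s₁ v = none ∨ s₁ v = s₂ v

/-- The join `s₁ ⊔ s₂` (keeping the value of `s₁` when both are defined). -/
def joinS {V Val : Type} (s₁ s₂ : PState V Val) : PState V Val := fun v =>
  match s₁ v with
  | some x => some x
  | none => s₂ v

/-- The update `s₁ ⊕ s₂`: the value of `s₂` when defined, otherwise that of `s₁`. -/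
def updS {V Val : Type} (s₁ s₂ : PState V Val) : PState V Val := fun v =>
  match s₂ v with
  | some x => some x
  | none => s₁ v

/-- A SAS+ action, given by its precondition, postcondition and prevail condition. -/
structure PAct (V Val : Type) where
  pre : PState V Val
  post : PState V Val
  prv : PState V Val

/-- An action is applicable in `s` iff `pre ⊔ prv ⊑ s`. -/
def Applicable {V Val : Type} (a : PAct V Val) (s : PState V Val) : Prop :=
  SubState (joinS a.pre a.prv) s

open Classical in
/-- Executing `a` in `s` yields `s ⊕ post a` if `a` is applicable, and `s` otherwise. -/
noncomputable def execA {V Val : Type} (a : PAct V Val) (s : PState V Val) : PState V Val :=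
  if Applicable a s then updS s a.post else s

/-- Executing a sequence of actions. -/
noncomputable def execP {V Val : Type} : PState V Val → List (PAct V Val) → PState V Val
  | s, [] => s
  | s, a :: π => execP (execA a s) π

/-- A MAP problem, given by the action sets `acts φ` of its agents and by the initial and
goal states, restricted to the agent set `ags`, is solvable: some plan (a sequence of
agent-action pairs, each agent in `ags` and each action belonging to the executing agent)
executed from `I` results in a state subsuming `G`. -/
def MAPSolvable {V Val Agent : Type} (acts : Agent → Set (PAct V Val)) (ags : Set Agent)
    (I G : PState V Val) : Prop :=
  ∃ π : List (Agent × PAct V Val),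
    (∀ p ∈ π, p.1 ∈ ags ∧ p.2 ∈ acts p.1) ∧
    SubState G (execP I (π.map Prod.snd))

/-- A single-agent SAS+ problem with action set `A` is solvable. -/
def SASolvable {V Val : Type} (A : Set (PAct V Val)) (I G : PState V Val) : Prop :=
  ∃ π : List (PAct V Val), (∀ a ∈ π, a ∈ A) ∧ SubState G (execP I π)

/-! ## The construction of Lemma 1's PSPACE-hardness reduction.
The new variable set is `Option V`, where `none` is the fresh Boolean variable `p`,
whose values `true`/`false` are represented by two distinct values `vT ≠ vF`. -/

/-- Lifting a partial state on `V` to `Option V` (leaving `p` undefined). -/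
def liftS {V Val : Type} (s : PState V Val) : PState (Option V) Val := fun x =>
  match x with
  | none => none
  | some v => s v

/-- Lifting an action on `V` to `Option V`. -/
def liftA {V Val : Type} (a : PAct V Val) : PAct (Option V) Val :=
  ⟨liftS a.pre, liftS a.post, liftS a.prv⟩

/-- The partial state that only assigns the value `val` to the fresh variable `p`. -/
def onlyP {V Val : Type} (val : Val) : PState (Option V) Val := fun x =>
  match x with
  | none => some val
  | some _ => none

/-- The modified action `a₀`: as `a₀`, but its postcondition additionally sets `p` to true. -/
def modA {V Val : Type} (a₀ : PAct V Val) (vT : Val) : PAct (Option V) Val :=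
  ⟨liftS a₀.pre,
   fun x => match x with
            | none => some vT
            | some v => a₀.post v,
   liftS a₀.prv⟩

/-- The single action `a*` of the second agent: precondition `p = true`, postcondition `G`. -/
def aStar {V Val : Type} (G : PState V Val) (vT : Val) : PAct (Option V) Val :=
  ⟨onlyP vT, liftS G, fun _ => none⟩

/-- The action set of the first agent: the actions of the original agent, lifted, with `a₀`
replaced by its modified version. -/
def acts1 {V Val : Type} (A : Set (PAct V Val)) (a₀ : PAct V Val) (vT : Val) :
    Set (PAct (Option V) Val) :=
  {b | ∃ a ∈ A, (a ≠ a₀ ∧ b = liftA a) ∨ (a = a₀ ∧ b = modA a₀ vT)}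

/-- The action sets of the two agents (`true` is the original agent, `false` the new one). -/
def newActs {V Val : Type} (A : Set (PAct V Val)) (a₀ : PAct V Val) (vT : Val)
    (G : PState V Val) : Bool → Set (PAct (Option V) Val) :=
  fun φ => if φ then acts1 A a₀ vT else {aStar G vT}

/-- The new initial state: as `I`, with the fresh variable `p` set to false. -/
def newInit {V Val : Type} (I : PState V Val) (vF : Val) : PState (Option V) Val := fun x =>
  match x with
  | none => some vF
  | some v => I v

/-!
Projecting the modified problem onto the original variables `V` forgets the fresh variable `p`,
and under this projection the first agent's actions behave exactly as the original ones. Hence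
the first agent alone solves the modified problem iff the original problem is solvable. The
second agent alone can never act, since `p` is initially false, so it succeeds only if `G`
already holds in `I`, in which case the original problem is trivially solvable. Together the
agents always succeed: the modified `a₀` sets `p`, after which `a*` achieves `G`.
-/

theorem List.exists_forall₂_of_forall_exists {α β : Type*} {R : α → β → Prop}
    {p : β → Prop} :
    ∀ {l : List α}, (∀ a ∈ l, ∃ b, p b ∧ R a b) →
      ∃ l', (∀ b ∈ l', p b) ∧ List.Forall₂ R l l'
  | [], _ => ⟨[], by simp, .nil⟩
  | a :: l, h => by
    obtain ⟨b, hb, hab⟩ := h a List.mem_cons_self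
    obtain ⟨l', hl', hll'⟩ :=
      exists_forall₂_of_forall_exists fun x hx => h x (List.mem_cons_of_mem a hx)
    exact ⟨b :: l', by simpa using ⟨hb, hl'⟩, .cons hab hll'⟩

section SAS

variable {V Val : Type}

theorem subState_updS_self (s t : PState V Val) : SubState t (updS s t) := by
  intro v
  cases h : t v <;> simp [updS, h]

theorem execP_eq_self_of_not_applicable {s : PState V Val} :
    ∀ {π : List (PAct V Val)}, (∀ a ∈ π, ¬ Applicable a s) → execP s π = s
  | [], _ => rfl
  | a :: π, h => by
    rw [execP, execA, if_neg (h a List.mem_cons_self)]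
    exact execP_eq_self_of_not_applicable fun b hb => h b (List.mem_cons_of_mem a hb)

theorem saSolvable_of_subState (A : Set (PAct V Val)) {I G : PState V Val} (h : SubState G I) :
    SASolvable A I G :=
  ⟨[], by simp, h⟩

theorem saSolvable_iff_of_not_applicable {A : Set (PAct V Val)} {I G : PState V Val}
    (h : ∀ a ∈ A, ¬ Applicable a I) : SASolvable A I G ↔ SubState G I := by
  refine ⟨fun ⟨π, hπ, hG⟩ => ?_, saSolvable_of_subState A⟩
  rwa [execP_eq_self_of_not_applicable fun a ha => h a (hπ a ha)] at hG

theorem mapSolvable_singleton_iff {Agent : Type} (acts : Agent → Set (PAct V Val)) (φ : Agent)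
    (I G : PState V Val) : MAPSolvable acts {φ} I G ↔ SASolvable (acts φ) I G := by
  constructor
  · rintro ⟨π, hπ, hG⟩
    refine ⟨π.map Prod.snd, ?_, hG⟩
    simp only [List.mem_map]
    rintro _ ⟨⟨ψ, a⟩, hmem, rfl⟩
    obtain ⟨rfl, ha⟩ := hπ _ hmem
    exact ha
  · rintro ⟨π, hπ, hG⟩
    refine ⟨π.map (φ, ·), ?_, by simpa [List.map_map] using hG⟩
    simp only [List.mem_map]
    rintro _ ⟨a, ha, rfl⟩
    exact ⟨rfl, hπ a ha⟩

end SAS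

section Lift

variable {V Val : Type}

def restrictS (s : PState (Option V) Val) : PState V Val := fun v => s (some v)

theorem liftS_subState_iff (t : PState V Val) (s : PState (Option V) Val) :
    SubState (liftS t) s ↔ SubState t (restrictS s) :=
  ⟨fun h v => h (some v), fun h x => x.casesOn (Or.inl rfl) h⟩

theorem joinS_liftS (s t : PState V Val) : joinS (liftS s) (liftS t) = liftS (joinS s t) := by
  funext x
  cases x <;> rfl

structure LiftsAction (a : PAct V Val) (b : PAct (Option V) Val) : Prop where
  pre_eq : b.pre = liftS a.pre
  prv_eq : b.prv = liftS a.prv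
  post_some : ∀ v, b.post (some v) = a.post v

theorem liftsAction_liftA (a : PAct V Val) : LiftsAction a (liftA a) :=
  ⟨rfl, rfl, fun _ => rfl⟩

theorem liftsAction_modA (a : PAct V Val) (vT : Val) : LiftsAction a (modA a vT) :=
  ⟨rfl, rfl, fun _ => rfl⟩

namespace LiftsAction

variable {a : PAct V Val} {b : PAct (Option V) Val}

theorem applicable_iff (h : LiftsAction a b) (s : PState (Option V) Val) :
    Applicable b s ↔ Applicable a (restrictS s) := by
  rw [Applicable, Applicable, h.pre_eq, h.prv_eq, joinS_liftS, liftS_subState_iff]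

theorem restrictS_execA (h : LiftsAction a b) (s : PState (Option V) Val) :
    restrictS (execA b s) = execA a (restrictS s) := by
  by_cases hs : Applicable a (restrictS s)
  · rw [execA, execA, if_pos ((h.applicable_iff s).2 hs), if_pos hs]
    funext v
    simp only [restrictS, updS, h.post_some]
  · rw [execA, execA, if_neg (mt (h.applicable_iff s).1 hs), if_neg hs]

theorem restrictS_execP {π : List (PAct V Val)} {bs : List (PAct (Option V) Val)}
    (h : List.Forall₂ LiftsAction π bs) (s : PState (Option V) Val) :
    restrictS (execP s bs) = execP (restrictS s) π := by
  induction h generalizing s with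
  | nil => rfl
  | cons hab _ ih => rw [execP, execP, ih, hab.restrictS_execA]

end LiftsAction

theorem saSolvable_liftS_iff {A : Set (PAct V Val)} {B : Set (PAct (Option V) Val)}
    (hBA : ∀ b ∈ B, ∃ a ∈ A, LiftsAction a b)
    (hAB : ∀ a ∈ A, ∃ b ∈ B, LiftsAction a b)
    (s : PState (Option V) Val) (G : PState V Val) :
    SASolvable B s (liftS G) ↔ SASolvable A (restrictS s) G := by
  constructor
  · rintro ⟨bs, hbs, hG⟩
    obtain ⟨π, hπ, hrel⟩ := List.exists_forall₂_of_forall_exists (R := flip LiftsAction)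
      fun b hb => hBA b (hbs b hb)
    rw [liftS_subState_iff, LiftsAction.restrictS_execP hrel.flip] at hG
    exact ⟨π, hπ, hG⟩
  · rintro ⟨π, hπ, hG⟩
    obtain ⟨bs, hbs, hrel⟩ :=
      List.exists_forall₂_of_forall_exists fun a ha => hAB a (hπ a ha)
    rw [← LiftsAction.restrictS_execP hrel, ← liftS_subState_iff] at hG
    exact ⟨bs, hbs, hG⟩

end Lift

section Reduction

variable {V Val : Type} {A : Set (PAct V Val)} {a₀ : PAct V Val} {vT : Val}

theorem exists_liftsAction_of_mem_acts1 {b : PAct (Option V) Val} (hb : b ∈ acts1 A a₀ vT) :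
    ∃ a ∈ A, LiftsAction a b := by
  obtain ⟨a, ha, ⟨-, rfl⟩ | ⟨rfl, rfl⟩⟩ := hb
  · exact ⟨a, ha, liftsAction_liftA a⟩
  · exact ⟨a, ha, liftsAction_modA a vT⟩

theorem exists_mem_acts1_liftsAction {a : PAct V Val} (ha : a ∈ A) :
    ∃ b ∈ acts1 A a₀ vT, LiftsAction a b := by
  by_cases h : a = a₀
  · exact ⟨modA a₀ vT, ⟨a, ha, .inr ⟨h, rfl⟩⟩, h ▸ liftsAction_modA a vT⟩
  · exact ⟨liftA a, ⟨a, ha, .inl ⟨h, rfl⟩⟩, liftsAction_liftA a⟩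

theorem saSolvable_acts1_iff (I G : PState V Val) (vF : Val) :
    SASolvable (acts1 A a₀ vT) (newInit I vF) (liftS G) ↔ SASolvable A I G :=
  saSolvable_liftS_iff (fun _ => exists_liftsAction_of_mem_acts1)
    (fun _ => exists_mem_acts1_liftsAction) (newInit I vF) G

theorem applicable_aStar_iff (G : PState V Val) (s : PState (Option V) Val) :
    Applicable (aStar G vT) s ↔ s none = some vT := by
  refine ⟨fun h => ?_, fun h x => ?_⟩
  · simpa [aStar, joinS, onlyP, eq_comm] using h none
  · cases x
    · exact .inr h.symm
    · exact .inl rfl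

theorem saSolvable_aStar_iff {vF : Val} (hTF : vT ≠ vF) (I G : PState V Val) :
    SASolvable {aStar G vT} (newInit I vF) (liftS G) ↔ SubState G I := by
  rw [saSolvable_iff_of_not_applicable, liftS_subState_iff]
  · rfl
  rintro _ rfl
  simpa [applicable_aStar_iff, newInit] using hTF.symm

theorem mapSolvable_newActs (ha₀ : a₀ ∈ A) {I : PState V Val} (happ : Applicable a₀ I)
    (G : PState V Val) (vF : Val) :
    MAPSolvable (newActs A a₀ vT G) Set.univ (newInit I vF) (liftS G) := by
  refine ⟨[(true, modA a₀ vT), (false, aStar G vT)], ?_, ?_⟩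
  · simp only [List.mem_cons, List.not_mem_nil, or_false]
    rintro _ (rfl | rfl)
    · exact ⟨trivial, a₀, ha₀, .inr ⟨rfl, rfl⟩⟩
    · exact ⟨trivial, rfl⟩
  · have h₁ : Applicable (modA a₀ vT) (newInit I vF) :=
      ((liftsAction_modA a₀ vT).applicable_iff _).2 happ
    have h₂ : Applicable (aStar G vT) (execA (modA a₀ vT) (newInit I vF)) := by
      rw [applicable_aStar_iff, execA, if_pos h₁]
      rfl
    change SubState (liftS G) (execA (aStar G vT) (execA (modA a₀ vT) (newInit I vF)))
    rw [execA, if_pos h₂]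
    exact subState_updS_self _ _

end Reduction

/-- **The reduction of Lemma 1.**  Let `⟨V, {φ}, I, G⟩` be a single-agent SAS+ problem with
action set `A` and let `a₀ ∈ A` be applicable in `I`.  Construct the two-agent MAP problem
with variables `Option V` (with fresh Boolean variable `p = none`, initially false), where
agent `true` has the actions of `A` with `a₀` modified to additionally set `p` to true, and
agent `false` has the single action `a*` with precondition `p = true` and postcondition `G`.
Then (i) the constructed problem is solvable, and (ii) it satisfies required cooperation
(solvable but not 1-agent solvable) iff the original problem is unsolvable. -/
theorem rc_reduction_of_plansat {V Val : Type}
    (A : Set (PAct V Val)) (I G : PState V Val)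
    (a₀ : PAct V Val) (ha₀ : a₀ ∈ A) (happ : Applicable a₀ I)
    (vT vF : Val) (hTF : vT ≠ vF) :
    MAPSolvable (newActs A a₀ vT G) Set.univ (newInit I vF) (liftS G) ∧
    ((MAPSolvable (newActs A a₀ vT G) Set.univ (newInit I vF) (liftS G) ∧
        ¬ ∃ φ : Bool, MAPSolvable (newActs A a₀ vT G) {φ} (newInit I vF) (liftS G)) ↔
      ¬ SASolvable A I G) := by
  have hsolv := mapSolvable_newActs (vT := vT) ha₀ happ G vF
  have hsingle :
      (∃ φ : Bool, MAPSolvable (newActs A a₀ vT G) {φ} (newInit I vF) (liftS G)) ↔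
        SASolvable A I G := by
    simp only [Bool.exists_bool, mapSolvable_singleton_iff, newActs, Bool.false_eq_true,
      if_false, if_true, saSolvable_aStar_iff hTF, saSolvable_acts1_iff]
    exact or_iff_right_of_imp (saSolvable_of_subState A)
  rw [hsingle]
  exact ⟨hsolv, and_iff_right hsolv⟩
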